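/- arXiv:1711.05249 — 2 statements merged into one kernel-verified Lean document; each statement's English description precedes it below -/
import Mathlib

section
/- Let 𝕀 be a linear generalized complex structure on 𝕍 = V ⊕ V* with bivector P = a ∘ 𝕀|_{V*} (a the projection to V). Let S ⊆ V be a subspace and τ ⊆ 𝕍 a maximal isotropic subspace with 𝕀(τ) = τ, a(τ) = S, and τ ∩ V* = Ann(S) (the annihilator of S). Then P(Ann(S)) ⊆ S, i.e., S is coisotropic for P. -/
/- STATEMENT 9: If (S, τ) is a linear rank-0 brane for a linear generalized
   complex structure 𝕀 on V ⊕ V*, with τ maximal isotropic, 𝕀-invariant,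
   a(τ) = S and τ ∩ V* = Ann(S), then S is coisotropic: P(Ann S) ⊆ S, where
   P = a ∘ 𝕀|_{V*}. -/

variable {V : Type*} [AddCommGroup V] [Module ℝ V] [FiniteDimensional ℝ V]

noncomputable def gpair (u v : V × Module.Dual ℝ V) : ℝ := (u.2 v.1 + v.2 u.1) / 2

theorem stmt9 (J : (V × Module.Dual ℝ V) →ₗ[ℝ] (V × Module.Dual ℝ V))
    (hI2 : ∀ u, J (J u) = -u)
    (horth : ∀ u v, gpair (J u) (J v) = gpair u v)
    (S : Submodule ℝ V) (τ : Submodule ℝ (V × Module.Dual ℝ V))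
    (hiso : ∀ u ∈ τ, ∀ v ∈ τ, gpair u v = 0)
    (hmax : Module.finrank ℝ τ = Module.finrank ℝ V)
    (hinv : ∀ u ∈ τ, J u ∈ τ)
    (hproj : Submodule.map (LinearMap.fst ℝ V (Module.Dual ℝ V)) τ = S)
    (hann : ∀ ξ : Module.Dual ℝ V, (((0 : V), ξ) ∈ τ ↔ ∀ s ∈ S, ξ s = 0)) :
    ∀ ξ : Module.Dual ℝ V, (∀ s ∈ S, ξ s = 0) → (J ((0 : V), ξ)).1 ∈ S := by
  intro ξ hξ
  have h1 : ((0 : V), ξ) ∈ τ := (hann ξ).mpr hξ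
  have h2 : J ((0 : V), ξ) ∈ τ := hinv _ h1
  rw [← hproj]
  exact ⟨_, h2, rfl⟩
end

section
/- Let ε ∈ Λ²L* decompose as ε = ε_{2,0} + ε_{1,1} + ε_{0,2} as in the deformation of the standard complex structure on ℂⁿ, and let S = ℂᵏ ⊆ ℂⁿ with τ = TS ⊕ N*S. Then the subbundle τ is invariant under the deformed generalized complex structure 𝕀_ε (with +i-eigenbundle (1+ε)L) if and only if: (i) S is coisotropic for the bivector ε_{2,0} (ε_{2,0}(N*S) ⊆ TS ⊗ ℂ after restriction), (ii) ε_{1,1} : T_{0,1} → T_{1,0} maps T_{0,1}S into T_{1,0}S, and (iii) the pullback of the 2-form ε_{0,2} to S vanishes. -/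
/- STATEMENT 14 (pointwise/linear-algebra version): For a deformation
   ε = ε₂₀ + ε₁₁ + ε₀₂ of the standard complex structure on ℂⁿ and
   S = ℂᵏ ⊆ ℂⁿ with τ = TS ⊕ N*S, the deformed generalized complex structure
   (with +i-eigenspace L_ε = (1+ε)L) leaves τ invariant — equivalently
   dim_ℂ (L_ε ∩ τ_ℂ) = n — iff (i) S is ε₂₀-coisotropic, (ii) ε₁₁ preserves S,
   and (iii) ε₀₂ pulls back to 0 on S.

   Model: the complexified tangent space T = T_{1,0} ⊕ T_{0,1} with each factor
   identified with ℂⁿ; ε₂₀ is a skew map e20 : (ℂⁿ)* → ℂⁿ, ε₁₁ a map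
   e11 : ℂⁿ → ℂⁿ (from T_{0,1} to T_{1,0} coordinates), ε₀₂ a skew form
   e02 : ℂⁿ → (ℂⁿ)*. -/

open Module

variable (n k : ℕ)

abbrev Cn (n : ℕ) := Fin n → ℂ

/-- Complexified tangent space: (1,0)-part × (0,1)-part. -/
abbrev Tc (n : ℕ) := Cn n × Cn n

/-- Complexified generalized tangent space. -/
abbrev GTc (n : ℕ) := Tc n × Module.Dual ℂ (Tc n)

variable (e20 : Module.Dual ℂ (Cn n) →ₗ[ℂ] Cn n)
  (e11 : Cn n →ₗ[ℂ] Cn n)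
  (e02 : Cn n →ₗ[ℂ] Module.Dual ℂ (Cn n))

/-- An element of L = T_{0,1} ⊕ T*_{1,0} is specified by (v, η) with v ∈ T_{0,1}
and η ∈ T*_{1,0}; its image in L_ε = (1+ε)L. -/
noncomputable def graphMap (p : Cn n × Module.Dual ℂ (Cn n)) : GTc n :=
  ((e20 p.2 + e11 p.1, p.1),
    p.2.comp (LinearMap.fst ℂ (Cn n) (Cn n))
      + (e02 p.1).comp (LinearMap.snd ℂ (Cn n) (Cn n))
      + p.2.comp (e11.comp (LinearMap.snd ℂ (Cn n) (Cn n))))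

/-- The deformed +i-eigenspace L_ε. -/
noncomputable def Leps : Submodule ℂ (GTc n) :=
  Submodule.span ℂ (Set.range (graphMap n e20 e11 e02))

/-- The subspace ℂᵏ ⊆ ℂⁿ (first k coordinates). -/
noncomputable def Sk : Submodule ℂ (Cn n) where
  carrier := {v | ∀ j : Fin n, k ≤ (j : ℕ) → v j = 0}
  add_mem' := by intro a b ha hb j hj; simp [ha j hj, hb j hj]
  zero_mem' := by intro j hj; rfl
  smul_mem' := by intro c v hv j hj; simp [hv j hj]

/-- The complexification of S = ℂᵏ inside the complexified tangent space. -/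
noncomputable def Sc : Submodule ℂ (Tc n) := (Sk n k).prod (Sk n k)

/-- The complexified generalized tangent bundle τ_ℂ = S_ℂ ⊕ Ann(S)_ℂ. -/
noncomputable def tauC : Submodule ℂ (GTc n) := (Sc n k).prod (Sc n k).dualAnnihilator

-- auxiliary: graphMap as a linear map
noncomputable def Gmap : (Cn n × Module.Dual ℂ (Cn n)) →ₗ[ℂ] GTc n where
  toFun := graphMap n e20 e11 e02
  map_add' p q := by
    simp only [graphMap]
    ext <;> simp <;> ring
  map_smul' c p := by
    simp only [graphMap]
    ext <;> simp <;> ring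

lemma Gmap_inj : Function.Injective (Gmap n e20 e11 e02) := by
  rw [← LinearMap.ker_eq_bot]
  ext ⟨v, η⟩
  simp only [LinearMap.mem_ker, Submodule.mem_bot]
  constructor
  · intro h
    have h1 : v = 0 := congrArg (fun x => x.1.2) h
    have h2 : ∀ x : Cn n, η x = 0 := by
      intro x
      have := congrArg (fun f => f.2 (x, 0)) h
      simpa [Gmap, graphMap, h1] using this
    exact Prod.ext h1 (LinearMap.ext h2)
  · intro h; rw [h, map_zero]

lemma Leps_eq_range : Leps n e20 e11 e02 = LinearMap.range (Gmap n e20 e11 e02) := by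
  have h : graphMap n e20 e11 e02 = ⇑(Gmap n e20 e11 e02) := rfl
  rw [Leps, h, ← LinearMap.coe_range, Submodule.span_eq]

-- membership in comap
lemma mem_comap_iff (v : Cn n) (η : Module.Dual ℂ (Cn n)) :
    (v, η) ∈ (tauC n k).comap (Gmap n e20 e11 e02) ↔
      (e20 η + e11 v ∈ Sk n k ∧ v ∈ Sk n k ∧
        ∀ a ∈ Sk n k, ∀ b ∈ Sk n k, η a + e02 v b + η (e11 b) = 0) := by
  simp only [Submodule.mem_comap, tauC, Submodule.mem_prod, Gmap, graphMap,
    LinearMap.coe_mk, AddHom.coe_mk, Sc, Submodule.mem_dualAnnihilator]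
  constructor
  · rintro ⟨⟨h1, h2⟩, h3⟩
    refine ⟨h1, h2, fun a ha b hb => ?_⟩
    have := h3 (a, b) ⟨ha, hb⟩
    simpa using this
  · rintro ⟨h1, h2, h3⟩
    refine ⟨⟨h1, h2⟩, ?_⟩
    rintro ⟨a, b⟩ ⟨ha, hb⟩
    simpa using h3 a ha b hb

lemma comap_le : (tauC n k).comap (Gmap n e20 e11 e02) ≤
    (Sk n k).prod (Sk n k).dualAnnihilator := by
  rintro ⟨v, η⟩ h
  rw [mem_comap_iff] at h
  obtain ⟨h1, h2, h3⟩ := h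
  refine Submodule.mem_prod.mpr ⟨h2, (Submodule.mem_dualAnnihilator _).mpr fun a ha => ?_⟩
  have := h3 a ha 0 (Submodule.zero_mem _)
  simpa using this

noncomputable def prodEquivAux {M N : Type*} [AddCommGroup M] [AddCommGroup N]
    [Module ℂ M] [Module ℂ N] (p : Submodule ℂ M) (q : Submodule ℂ N) :
    (p.prod q) ≃ₗ[ℂ] p × q where
  toFun x := (⟨x.1.1, x.2.1⟩, ⟨x.1.2, x.2.2⟩)
  map_add' _ _ := rfl
  map_smul' _ _ := rfl
  invFun x := ⟨(x.1.1, x.2.1), x.1.2, x.2.2⟩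
  left_inv _ := rfl
  right_inv _ := rfl

noncomputable def SkEquiv : (Fin k → ℂ) →ₗ[ℂ] Cn n where
  toFun x j := if h : (j : ℕ) < k then x ⟨j, h⟩ else 0
  map_add' x y := by ext j; by_cases h : (j : ℕ) < k <;> simp [h]
  map_smul' c x := by ext j; by_cases h : (j : ℕ) < k <;> simp [h]

lemma SkEquiv_inj (hk : k ≤ n) : Function.Injective (SkEquiv n k) := by
  intro x y h
  ext ⟨i, hi⟩
  have := congrFun h ⟨i, lt_of_lt_of_le hi hk⟩
  simpa [SkEquiv, hi] using this

lemma SkEquiv_range (hk : k ≤ n) : LinearMap.range (SkEquiv n k) = Sk n k := by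
  ext v
  constructor
  · rintro ⟨x, rfl⟩ j hj
    simp [SkEquiv, Nat.not_lt.2 hj]
  · intro hv
    refine ⟨fun i => v ⟨i, lt_of_lt_of_le i.2 hk⟩, ?_⟩
    ext j
    by_cases h : (j : ℕ) < k
    · simp [SkEquiv, h]
    · simp [SkEquiv, h, hv j (Nat.not_lt.1 h)]

lemma finrank_Sk (hk : k ≤ n) : finrank ℂ (Sk n k) = k := by
  rw [← SkEquiv_range n k hk, LinearMap.finrank_range_of_inj (SkEquiv_inj n k hk),
    Module.finrank_fin_fun]

lemma finrank_ann (hk : k ≤ n) : finrank ℂ (Sk n k).dualAnnihilator = n - k := by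
  have h1 := LinearEquiv.finrank_eq (Subspace.quotEquivAnnihilator (Sk n k))
  have h2 := Submodule.finrank_quotient_add_finrank (Sk n k)
  have h3 : finrank ℂ (Cn n) = n := Module.finrank_fin_fun ℂ
  rw [finrank_Sk n k hk, h3] at h2
  omega

lemma finrank_target (hk : k ≤ n) :
    finrank ℂ ((Sk n k).prod (Sk n k).dualAnnihilator) = n := by
  rw [(prodEquivAux _ _).finrank_eq, Module.finrank_prod, finrank_Sk n k hk,
    finrank_ann n k hk]
  omega

theorem stmt14 (hk : k ≤ n)
    (h20skew : ∀ ξ η : Module.Dual ℂ (Cn n), ξ (e20 η) = - η (e20 ξ))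
    (h02skew : ∀ v w : Cn n, e02 v w = - e02 w v) :
    finrank ℂ ↥(Leps n e20 e11 e02 ⊓ tauC n k) = n ↔
      ((∀ η : Module.Dual ℂ (Cn n), (∀ v ∈ Sk n k, η v = 0) → e20 η ∈ Sk n k) ∧
       (∀ v ∈ Sk n k, e11 v ∈ Sk n k) ∧
       (∀ v ∈ Sk n k, ∀ w ∈ Sk n k, e02 v w = 0)) := by
  have hrw : Leps n e20 e11 e02 ⊓ tauC n k
      = ((tauC n k).comap (Gmap n e20 e11 e02)).map (Gmap n e20 e11 e02) := by
    rw [Submodule.map_comap_eq, Leps_eq_range]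
  have hfr : finrank ℂ ↥(Leps n e20 e11 e02 ⊓ tauC n k)
      = finrank ℂ ↥((tauC n k).comap (Gmap n e20 e11 e02)) := by
    rw [hrw]
    exact (Submodule.equivMapOfInjective _ (Gmap_inj n e20 e11 e02) _).symm.finrank_eq
  rw [hfr]
  constructor
  · intro hdim
    have heq : (tauC n k).comap (Gmap n e20 e11 e02)
        = (Sk n k).prod (Sk n k).dualAnnihilator := by
      apply Submodule.eq_of_le_of_finrank_eq (comap_le n k e20 e11 e02)
      rw [hdim, finrank_target n k hk]
    refine ⟨?_, ?_, ?_⟩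
    · intro η hη
      have hmem : ((0 : Cn n), η) ∈ (tauC n k).comap (Gmap n e20 e11 e02) := by
        rw [heq]
        exact Submodule.mem_prod.mpr ⟨Submodule.zero_mem _, (Submodule.mem_dualAnnihilator _).mpr hη⟩
      rw [mem_comap_iff] at hmem
      simpa using hmem.1
    · intro v hv
      have hmem : (v, (0 : Module.Dual ℂ (Cn n))) ∈ (tauC n k).comap (Gmap n e20 e11 e02) := by
        rw [heq]; exact ⟨hv, Submodule.zero_mem _⟩
      rw [mem_comap_iff] at hmem
      simpa using hmem.1
    · intro v hv w hw
      have hmem : (v, (0 : Module.Dual ℂ (Cn n))) ∈ (tauC n k).comap (Gmap n e20 e11 e02) := by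
        rw [heq]; exact ⟨hv, Submodule.zero_mem _⟩
      rw [mem_comap_iff] at hmem
      have := hmem.2.2 0 (Submodule.zero_mem _) w hw
      simpa using this
  · rintro ⟨h1, h2, h3⟩
    have heq : (tauC n k).comap (Gmap n e20 e11 e02)
        = (Sk n k).prod (Sk n k).dualAnnihilator := by
      refine le_antisymm (comap_le n k e20 e11 e02) ?_
      rintro ⟨v, η⟩ hmem
      obtain ⟨hv, hη'⟩ := Submodule.mem_prod.mp hmem
      have hη := (Submodule.mem_dualAnnihilator _).mp hη'
      rw [mem_comap_iff]
      refine ⟨Submodule.add_mem _ (h1 η hη) (h2 v hv), hv, fun a ha b hb => ?_⟩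
      rw [hη a ha, h3 v hv b hb, hη (e11 b) (h2 b hb)]
      ring
    rw [heq, finrank_target n k hk]
end
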